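/- Define the block matrix M(t) ∈ ℝ^{2n×2n} by M(t) = [[A₁(t) + B(t)G, B(t)], [Q(t) − G·A₁(t) − A₂(t)ᵀG − G·B(t)·G, −A₂(t)ᵀ − G·B(t)]]. Suppose Φ : [0,T] → ℝ^{2n×2n} is differentiable with Φ̇(s) = −Φ(s)·M(s) for s ∈ [0,T] and Φ(T) = I, and suppose the lower-right n×n block Φ₂₂(t) of Φ(t) is invertible for every t ∈ [0,T]. Then the function P(t) := G − Φ₂₂(t)⁻¹·Φ₂₁(t), where Φ₂₁(t) is the lower-left n×n block of Φ(t), is differentiable and satisfies Ṗ(t) + P(t)A₁(t) + A₂(t)ᵀP(t) + P(t)B(t)P(t) − Q(t) = 0 on [0,T] with P(T) = G. (This is the explicit-solution formula (5.5) of the final proposition of Section 5 of the paper, giving the unique solutions P₂, P₃, P̂ of the Riccati equations (5.2)–(5.4) via the state transition matrix Ψᵢ(T,t) of the associated linear matrix ODE.) -/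

import Mathlib

/-!
Radon's lemma: if `Φ̇ = −ΦM` and the block `Φ₂₂` is invertible, then `W = Φ₂₂⁻¹Φ₂₁` solves the
Riccati equation `Ẇ = W M₁₂ W + M₂₂ W − W M₁₁ − M₂₁`, by the product rule and
`(Y⁻¹)' = −Y⁻¹ Ẏ Y⁻¹`. The blocks of `M` are chosen so that substituting `W = G − P` turns this
into the Riccati equation for `P`, and `P(T) = G` because the lower-left block of `Φ(T) = I`
vanishes.
-/

open Matrix Set

attribute [local instance] Matrix.normedAddCommGroup Matrix.normedSpace

open Filter Topology

section Calculus

variable {𝕜 : Type*} [NontriviallyNormedField 𝕜] {l m n o : Type*} {t : 𝕜}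

theorem HasDerivAt.matrix_mul [Fintype l] [Fintype m] [Fintype n]
    {f : 𝕜 → Matrix l m 𝕜} {g : 𝕜 → Matrix m n 𝕜} {f' : Matrix l m 𝕜} {g' : Matrix m n 𝕜}
    (hf : HasDerivAt f f' t) (hg : HasDerivAt g g' t) :
    HasDerivAt (fun s => f s * g s) (f' * g t + f t * g') t := by
  have hf_entry i k := hasDerivAt_pi.1 (hasDerivAt_pi.1 hf i) k
  have hg_entry k j := hasDerivAt_pi.1 (hasDerivAt_pi.1 hg k) j
  refine hasDerivAt_pi.2 fun i => hasDerivAt_pi.2 fun j => ?_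
  simp only [Matrix.add_apply, mul_apply, ← Finset.sum_add_distrib]
  exact HasDerivAt.fun_sum fun k _ => (hf_entry i k).mul (hg_entry k j)

theorem HasDerivAt.matrix_submatrix [Fintype m] [Fintype n] [Fintype l] [Fintype o]
    {f : 𝕜 → Matrix m n 𝕜} {f' : Matrix m n 𝕜} (hf : HasDerivAt f f' t) (r : l → m) (c : o → n) :
    HasDerivAt (fun s => (f s).submatrix r c) (f'.submatrix r c) t :=
  hasDerivAt_pi.2 fun i => hasDerivAt_pi.2 fun j => hasDerivAt_pi.1 (hasDerivAt_pi.1 hf (r i)) (c j)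

theorem HasDerivAt.matrix_toBlocks₂₁ [Fintype l] [Fintype m] [Fintype n] [Fintype o]
    {f : 𝕜 → Matrix (l ⊕ m) (n ⊕ o) 𝕜} {f' : Matrix (l ⊕ m) (n ⊕ o) 𝕜} (hf : HasDerivAt f f' t) :
    HasDerivAt (fun s => (f s).toBlocks₂₁) f'.toBlocks₂₁ t :=
  hf.matrix_submatrix Sum.inr Sum.inl

theorem HasDerivAt.matrix_toBlocks₂₂ [Fintype l] [Fintype m] [Fintype n] [Fintype o]
    {f : 𝕜 → Matrix (l ⊕ m) (n ⊕ o) 𝕜} {f' : Matrix (l ⊕ m) (n ⊕ o) 𝕜} (hf : HasDerivAt f f' t) :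
    HasDerivAt (fun s => (f s).toBlocks₂₂) f'.toBlocks₂₂ t :=
  hf.matrix_submatrix Sum.inr Sum.inr

theorem HasDerivAt.matrix_inv [Fintype n] [DecidableEq n] {Y : 𝕜 → Matrix n n 𝕜} {Y' : Matrix n n 𝕜}
    (hY : HasDerivAt Y Y' t) (hu : IsUnit (Y t)) :
    HasDerivAt (fun s => (Y s)⁻¹) (-((Y t)⁻¹ * Y' * (Y t)⁻¹)) t := by
  have hdet : (Y t).det ≠ 0 := ((isUnit_iff_isUnit_det _).1 hu).ne_zero
  have hcont : ContinuousAt (fun s => (Y s)⁻¹) t := by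
    refine (continuousAt_matrix_inv _ ?_).comp hY.continuousAt
    rw [Ring.inverse_eq_inv']
    exact continuousAt_inv₀ hdet
  have hunit : ∀ᶠ s in 𝓝[≠] t, IsUnit (Y s) := by
    have := (continuous_id.matrix_det.continuousAt.comp hY.continuousAt).eventually_ne hdet
    filter_upwards [nhdsWithin_le_nhds this] with s hs
    exact (isUnit_iff_isUnit_det _).2 (isUnit_iff_ne_zero.2 hs)
  have hlim := (((hcont.tendsto.mono_left nhdsWithin_le_nhds).mul
    (hasDerivAt_iff_tendsto_slope.1 hY).neg).mul (tendsto_const_nhds (x := (Y t)⁻¹)))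
  rw [Matrix.mul_neg, Matrix.neg_mul] at hlim
  -- `Y(s)⁻¹ − Y(t)⁻¹ = Y(s)⁻¹ (Y(t) − Y(s)) Y(t)⁻¹` and `Y⁻¹` is continuous at `t`
  refine hasDerivAt_iff_tendsto_slope.2 (hlim.congr' ?_)
  filter_upwards [hunit] with s hs
  rw [slope_def_module, slope_def_module, Matrix.inv_sub_inv ⟨fun _ => hu, fun _ => hs⟩,
    ← neg_sub (Y s)]
  simp only [Matrix.mul_neg, Matrix.neg_mul, smul_neg, Matrix.mul_smul, Matrix.smul_mul]

end Calculus

section Blocks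

variable {α : Type*} [NonUnitalNonAssocSemiring α] {l m n o p q : Type*} [Fintype n] [Fintype o]

theorem Matrix.toBlocks₂₁_mul (A : Matrix (l ⊕ m) (n ⊕ o) α) (B : Matrix (n ⊕ o) (p ⊕ q) α) :
    (A * B).toBlocks₂₁ = A.toBlocks₂₁ * B.toBlocks₁₁ + A.toBlocks₂₂ * B.toBlocks₂₁ := by
  ext i j
  simp [toBlocks₂₁, toBlocks₁₁, toBlocks₂₂, mul_apply, Fintype.sum_sum_type]

theorem Matrix.toBlocks₂₂_mul (A : Matrix (l ⊕ m) (n ⊕ o) α) (B : Matrix (n ⊕ o) (p ⊕ q) α) :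
    (A * B).toBlocks₂₂ = A.toBlocks₂₁ * B.toBlocks₁₂ + A.toBlocks₂₂ * B.toBlocks₂₂ := by
  ext i j
  simp [toBlocks₂₁, toBlocks₁₂, toBlocks₂₂, mul_apply, Fintype.sum_sum_type]

end Blocks

theorem hasDerivAt_toBlocks₂₂_inv_mul_toBlocks₂₁ {𝕜 : Type*} [NontriviallyNormedField 𝕜]
    {m n : Type*} [Fintype m] [Fintype n] [DecidableEq n] {t : 𝕜}
    {Φ : 𝕜 → Matrix (m ⊕ n) (m ⊕ n) 𝕜} {M : Matrix (m ⊕ n) (m ⊕ n) 𝕜} {W : Matrix n m 𝕜}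
    (hΦ : HasDerivAt Φ (-(Φ t * M)) t) (hu : IsUnit (Φ t).toBlocks₂₂)
    (hW : (Φ t).toBlocks₂₂⁻¹ * (Φ t).toBlocks₂₁ = W) :
    HasDerivAt (fun s => (Φ s).toBlocks₂₂⁻¹ * (Φ s).toBlocks₂₁)
      (W * M.toBlocks₁₂ * W + M.toBlocks₂₂ * W - W * M.toBlocks₁₁ - M.toBlocks₂₁) t := by
  have hY : HasDerivAt (fun s => (Φ s).toBlocks₂₂)
      (-((Φ t).toBlocks₂₁ * M.toBlocks₁₂ + (Φ t).toBlocks₂₂ * M.toBlocks₂₂)) t :=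
    toBlocks₂₂_mul (Φ t) M ▸ hΦ.matrix_toBlocks₂₂
  have hZ : HasDerivAt (fun s => (Φ s).toBlocks₂₁)
      (-((Φ t).toBlocks₂₁ * M.toBlocks₁₁ + (Φ t).toBlocks₂₂ * M.toBlocks₂₁)) t :=
    toBlocks₂₁_mul (Φ t) M ▸ hΦ.matrix_toBlocks₂₁
  have hYinv_mul : (Φ t).toBlocks₂₂⁻¹ * (Φ t).toBlocks₂₂ = 1 :=
    nonsing_inv_mul _ ((isUnit_iff_isUnit_det _).1 hu)
  convert (hY.matrix_inv hu).matrix_mul hZ using 1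
  simp only [Matrix.mul_add, Matrix.mul_neg, Matrix.neg_mul, Matrix.add_mul, neg_neg,
    ← Matrix.mul_assoc, hYinv_mul, Matrix.one_mul, hW]
  simp only [Matrix.mul_assoc _ (Φ t).toBlocks₂₂⁻¹, hW]
  abel

theorem riccati_solution_via_transition_matrix_general {n : ℕ} (T : ℝ)
    (A₁ A₂ B Q : ℝ → Matrix (Fin n) (Fin n) ℝ)
    (G : Matrix (Fin n) (Fin n) ℝ)
    (M : ℝ → Matrix (Fin n ⊕ Fin n) (Fin n ⊕ Fin n) ℝ)
    (hM : ∀ t : ℝ, M t =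
      Matrix.fromBlocks (A₁ t + B t * G) (B t)
        (Q t - G * A₁ t - (A₂ t)ᵀ * G - G * B t * G) (-(A₂ t)ᵀ - G * B t))
    (Φ : ℝ → Matrix (Fin n ⊕ Fin n) (Fin n ⊕ Fin n) ℝ)
    (hΦ : ∀ s ∈ Icc 0 T, HasDerivAt Φ (-(Φ s * M s)) s)
    (hΦT : Φ T = 1)
    (hinv : ∀ t ∈ Icc 0 T, IsUnit ((Φ t).toBlocks₂₂))
    (P : ℝ → Matrix (Fin n) (Fin n) ℝ)
    (hPdef : ∀ t : ℝ, P t = G - ((Φ t).toBlocks₂₂)⁻¹ * (Φ t).toBlocks₂₁) :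
    (∀ t ∈ Icc 0 T,
      HasDerivAt P (-(P t * A₁ t + (A₂ t)ᵀ * P t + P t * B t * P t - Q t)) t) ∧
    P T = G := by
  refine ⟨fun t ht => ?_, by simp [hPdef, hΦT, ← fromBlocks_one]⟩
  have hW : (Φ t).toBlocks₂₂⁻¹ * (Φ t).toBlocks₂₁ = G - P t := by rw [hPdef, sub_sub_cancel]
  refine ((hasDerivAt_const t G).sub
    (hasDerivAt_toBlocks₂₂_inv_mul_toBlocks₂₁ (hΦ t ht) (hinv t ht) hW)).congr_of_eventuallyEq
    (.of_forall hPdef) |>.congr_deriv ?_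
  simp only [hM t, toBlocks_fromBlocks₁₁, toBlocks_fromBlocks₁₂, toBlocks_fromBlocks₂₁,
    toBlocks_fromBlocks₂₂]
  noncomm_ring

/-- Explicit-solution formula (5.5): if `Φ` solves the backward linear matrix
ODE `Φ̇ = −Φ·M` with `Φ(T) = I` for the block matrix
`M = [[A₁+BG, B], [Q − GA₁ − A₂ᵀG − GBG, −A₂ᵀ − GB]]`, and the lower-right
block `Φ₂₂(t)` is invertible on `[0,T]`, then `P(t) = G − Φ₂₂(t)⁻¹ Φ₂₁(t)`
solves the terminal-value Riccati equation. -/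
theorem riccati_solution_via_transition_matrix {n : ℕ} (T : ℝ) (hT : 0 < T)
    (A₁ A₂ B Q : ℝ → Matrix (Fin n) (Fin n) ℝ)
    (hA₁ : ContinuousOn A₁ (Icc 0 T)) (hA₂ : ContinuousOn A₂ (Icc 0 T))
    (hB : ContinuousOn B (Icc 0 T)) (hQ : ContinuousOn Q (Icc 0 T))
    (G : Matrix (Fin n) (Fin n) ℝ)
    (M : ℝ → Matrix (Fin n ⊕ Fin n) (Fin n ⊕ Fin n) ℝ)
    (hM : ∀ t : ℝ, M t =
      Matrix.fromBlocks (A₁ t + B t * G) (B t)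
        (Q t - G * A₁ t - (A₂ t)ᵀ * G - G * B t * G) (-(A₂ t)ᵀ - G * B t))
    (Φ : ℝ → Matrix (Fin n ⊕ Fin n) (Fin n ⊕ Fin n) ℝ)
    (hΦ : ∀ s ∈ Icc 0 T, HasDerivAt Φ (-(Φ s * M s)) s)
    (hΦT : Φ T = 1)
    (hinv : ∀ t ∈ Icc 0 T, IsUnit ((Φ t).toBlocks₂₂))
    (P : ℝ → Matrix (Fin n) (Fin n) ℝ)
    (hPdef : ∀ t : ℝ, P t = G - ((Φ t).toBlocks₂₂)⁻¹ * (Φ t).toBlocks₂₁) :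
    (∀ t ∈ Icc 0 T,
      HasDerivAt P (-(P t * A₁ t + (A₂ t)ᵀ * P t + P t * B t * P t - Q t)) t) ∧
    P T = G :=
  riccati_solution_via_transition_matrix_general T A₁ A₂ B Q G M hM Φ hΦ hΦT hinv P hPdef
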